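/- arXiv:2109.14932 — 6 statements merged into one kernel-verified Lean document; each statement's English description precedes it below -/
import Mathlib

section
/- Characterization of shared-constraint Nash equilibria: A joint strategy x* ∈ X is a Nash equilibrium of the shared constraint game (f, X) if and only if x* ∈ C-argmin{(x, f(x)) : x ∈ X}, where C = {(x,f) : ∃ i, x_{-i} = 0 and f_i ≥ 0}. That is, NE(f, X) = C-argmin{(x, f(x)) : x ∈ X}. -/
/-- The set of `D`-Pareto minimizers of `g` over the feasible set `S`. -/
def paretoArgmin {A Z : Type*} [AddCommGroup Z] (D : Set Z) (g : A → Z)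
    (S : Set A) : Set A :=
  {xs | xs ∈ S ∧ ∀ x ∈ S, g xs - g x ∈ D → g x - g xs ∈ D}

/-- The cone `C_i` for player `i` inside `(∏ j, X j) × ℝ^N`. -/
def playerCone {N : ℕ} (X : Fin N → Type*) [∀ j, AddCommGroup (X j)]
    [∀ j, Module ℝ (X j)] (i : Fin N) : Set ((∀ j, X j) × (Fin N → ℝ)) :=
  {p | (∀ j, j ≠ i → p.1 j = 0) ∧ 0 ≤ p.2 i}

/-- The non-convex ordering cone `C = ⋃ i, C_i`. -/
def bigCone {N : ℕ} (X : Fin N → Type*) [∀ j, AddCommGroup (X j)]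
    [∀ j, Module ℝ (X j)] : Set ((∀ j, X j) × (Fin N → ℝ)) :=
  {p | ∃ i, (∀ j, j ≠ i → p.1 j = 0) ∧ 0 ≤ p.2 i}

/-- The set of Nash equilibria of the shared constraint game `(f, S)`: feasible
joint strategies `x*` such that no player `i` can strictly decrease her cost by
a unilateral feasible deviation. -/
def nashEq {N : ℕ} {X : Fin N → Type*} (f : (∀ j, X j) → Fin N → ℝ)
    (S : Set (∀ j, X j)) : Set (∀ j, X j) :=
  {xs | xs ∈ S ∧ ∀ (i : Fin N) (xi : X i),
    Function.update xs i xi ∈ S → f xs i ≤ f (Function.update xs i xi) i}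


/-! The difference of two graph points `(x*, f x*) - (y, f y)` lies in `C_i` exactly when `y` is
a unilateral deviation of player `i` from `x*` that does not raise her cost, so the Pareto
condition only ever compares `x*` with such deviations. If one of them, `y`, strictly lowered her
cost, Pareto minimality would put `(y - x*, f y - f x*)` into some `C_{i'}`: for `i' = i` this
contradicts the strict decrease, and for `i' ≠ i` it forces `y = x*`. -/

open Function

section

variable {N : ℕ} {X : Fin N → Type*} [∀ j, AddCommGroup (X j)] [∀ j, Module ℝ (X j)]

theorem mem_bigCone_iff {p : (∀ j, X j) × (Fin N → ℝ)} :
    p ∈ bigCone X ↔ ∃ i, p ∈ playerCone X i :=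
  Iff.rfl

theorem mem_playerCone_sub_iff {i : Fin N} {x y : ∀ j, X j} {a b : Fin N → ℝ} :
    (x - y, a - b) ∈ playerCone X i ↔ (∀ j ≠ i, x j = y j) ∧ b i ≤ a i := by
  simp only [playerCone, Set.mem_ofPred_eq, Pi.sub_apply, sub_eq_zero, sub_nonneg]

theorem nashEq_subset_paretoArgmin (f : (∀ j, X j) → Fin N → ℝ) (S : Set (∀ j, X j)) :
    nashEq f S ⊆ paretoArgmin (bigCone X) (fun x => (x, f x)) S := by
  rintro xs ⟨hxs, hNash⟩
  refine ⟨hxs, fun x hx hcone => ?_⟩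
  obtain ⟨i, hi⟩ := mem_bigCone_iff.1 hcone
  obtain ⟨hoff, -⟩ := mem_playerCone_sub_iff.1 hi
  have hdev : update xs i (x i) = x := update_eq_iff.2 ⟨rfl, hoff⟩
  have hcost : f xs i ≤ f x i := by
    simpa only [hdev] using hNash i (x i) (by rwa [hdev])
  exact mem_bigCone_iff.2 ⟨i, mem_playerCone_sub_iff.2 ⟨fun j hj => (hoff j hj).symm, hcost⟩⟩

theorem paretoArgmin_subset_nashEq (f : (∀ j, X j) → Fin N → ℝ) (S : Set (∀ j, X j)) :
    paretoArgmin (bigCone X) (fun x => (x, f x)) S ⊆ nashEq f S := by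
  rintro xs ⟨hxs, hPareto⟩
  refine ⟨hxs, fun i xi hdev => ?_⟩
  by_contra! hlt
  have hcone : (xs - update xs i xi, f xs - f (update xs i xi)) ∈ playerCone X i :=
    mem_playerCone_sub_iff.2 ⟨fun j hj => (update_of_ne hj xi xs).symm, hlt.le⟩
  obtain ⟨i', hi'⟩ := mem_bigCone_iff.1 (hPareto _ hdev (mem_bigCone_iff.2 ⟨i, hcone⟩))
  obtain ⟨hoff, hcost⟩ := mem_playerCone_sub_iff.1 hi'
  rcases eq_or_ne i' i with rfl | hne
  · exact hlt.not_ge hcost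
  · have hxi : xi = xs i := by simpa using hoff i hne.symm
    simp [hxi] at hlt

end

/-- A joint strategy `x* ∈ X` is a Nash equilibrium of the shared constraint
game `(f, X)` iff it is a `C`-Pareto minimizer of `x ↦ (x, f(x))` over `X`:
`NE(f, X) = C-argmin {(x, f(x)) : x ∈ X}`. -/
theorem nashEq_eq_paretoArgmin {N : ℕ} (X : Fin N → Type*)
    [∀ j, AddCommGroup (X j)] [∀ j, Module ℝ (X j)]
    (f : (∀ j, X j) → Fin N → ℝ) (S : Set (∀ j, X j)) :
    nashEq f S = paretoArgmin (bigCone X) (fun x => (x, f x)) S := by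
  exact (nashEq_subset_paretoArgmin f S).antisymm (paretoArgmin_subset_nashEq f S)
end

section
/- For the shared constraint game, the set of C_i-Pareto minimizers of (x, f(x)) over X equals the graph of player i's best response correspondence: C_i-argmin{(x,f(x)) : x ∈ X} = {x* ∈ X : x*_i ∈ argmin_{x_i}{f_i(x_i, x*_{-i}) : (x_i, x*_{-i}) ∈ X}}. -/
/-- The graph of player `i`'s best response correspondence: feasible `x*`
such that `x*_i` minimizes `f_i(·, x*_{-i})` over feasible deviations. -/
def bestResponseGraph {N : ℕ} {X : Fin N → Type*} (f : (∀ j, X j) → Fin N → ℝ)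
    (S : Set (∀ j, X j)) (i : Fin N) : Set (∀ j, X j) :=
  {xs | xs ∈ S ∧ ∀ xi : X i,
    Function.update xs i xi ∈ S → f xs i ≤ f (Function.update xs i xi) i}

theorem Function.forall_eq_off_iff_forall_update {ι : Type*} [DecidableEq ι] {β : ι → Type*}
    (y : ∀ j, β j) (i : ι) (P : (∀ j, β j) → Prop) :
    (∀ x, (∀ j ≠ i, x j = y j) → P x) ↔ ∀ b, P (Function.update y i b) := by
  refine ⟨fun h b => h _ fun j hj => Function.update_of_ne hj b y, fun h x hx => ?_⟩
  have hx_update : x = Function.update y i (x i) := Function.eq_update_iff.2 ⟨rfl, hx⟩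
  exact hx_update ▸ h (x i)

section PlayerCone

variable {N : ℕ} {X : Fin N → Type*} [∀ j, AddCommGroup (X j)] [∀ j, Module ℝ (X j)]

theorem sub_mem_playerCone_iff {i : Fin N} {p q : (∀ j, X j) × (Fin N → ℝ)} :
    p - q ∈ playerCone X i ↔ (∀ j ≠ i, p.1 j = q.1 j) ∧ q.2 i ≤ p.2 i := by
  simp only [playerCone, Set.mem_ofPred_eq, Prod.fst_sub, Prod.snd_sub, Pi.sub_apply,
    sub_eq_zero, sub_nonneg]

/-- Points comparable in `C_i` agree off `i`, and on the `i`-th cost the order is total, so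
"not dominated" becomes "at least as good". -/
theorem mem_paretoArgmin_playerCone_iff {f : (∀ j, X j) → Fin N → ℝ} {S : Set (∀ j, X j)}
    {i : Fin N} {xs : ∀ j, X j} :
    xs ∈ paretoArgmin (playerCone X i) (fun x => (x, f x)) S ↔
      xs ∈ S ∧ ∀ x, (∀ j ≠ i, x j = xs j) → x ∈ S → f xs i ≤ f x i := by
  simp only [paretoArgmin, Set.mem_ofPred_eq, sub_mem_playerCone_iff]
  refine and_congr_right fun _ => ⟨fun h x hx hxS => ?_, fun h x hxS ⟨hx, _⟩ => ?_⟩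
  · rcases le_total (f xs i) (f x i) with hle | hle
    · exact hle
    · exact (h x hxS ⟨fun j hj => (hx j hj).symm, hle⟩).2
  · exact ⟨fun j hj => (hx j hj).symm, h x (fun j hj => (hx j hj).symm) hxS⟩

end PlayerCone

/-- The `C_i`-Pareto minimizers over `X` coincide with the graph of player
`i`'s best response correspondence. -/
theorem paretoArgmin_eq_bestResponseGraph {N : ℕ} (X : Fin N → Type*)
    [∀ j, AddCommGroup (X j)] [∀ j, Module ℝ (X j)]
    (f : (∀ j, X j) → Fin N → ℝ) (S : Set (∀ j, X j)) (i : Fin N) :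
    paretoArgmin (playerCone X i) (fun x => (x, f x)) S =
      bestResponseGraph f S i := by
  ext xs
  rw [mem_paretoArgmin_playerCone_iff, Function.forall_eq_off_iff_forall_update xs i]
  rfl
end

section
/- Necessary condition for generalized Nash equilibria: If X̄ ⊆ ⋂_{i=1}^N 𝕏_i, then every generalized Nash equilibrium x* that lies in X̄ is a C-Pareto minimizer of (x, f(x)) over X̄: NE(f, (𝕏_i)) ∩ X̄ ⊆ C-argmin{(x, f(x)) : x ∈ X̄}. -/
/-- The set of generalized Nash equilibria: `x* ∈ ⋂ i, 𝕏 i` such that no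
player `i` can strictly decrease her cost by a unilateral deviation that is
feasible for her own constraint set `𝕏 i`. -/
def genNashEq {N : ℕ} {X : Fin N → Type*} (f : (∀ j, X j) → Fin N → ℝ)
    (K : Fin N → Set (∀ j, X j)) : Set (∀ j, X j) :=
  {xs | xs ∈ ⋂ i, K i ∧ ∀ (i : Fin N) (xi : X i),
    Function.update xs i xi ∈ K i → f xs i ≤ f (Function.update xs i xi) i}

theorem mem_bigCone_sub_iff {N : ℕ} {X : Fin N → Type*} [∀ j, AddCommGroup (X j)]
    [∀ j, Module ℝ (X j)] {a b : ∀ j, X j} {u v : Fin N → ℝ} :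
    (a, u) - (b, v) ∈ bigCone X ↔ ∃ i, (∀ j, j ≠ i → a j = b j) ∧ v i ≤ u i := by
  simp only [bigCone, Set.mem_ofPred_eq, Prod.fst_sub, Prod.snd_sub, Pi.sub_apply, sub_eq_zero,
    sub_nonneg]

theorem genNashEq.le_of_unilateral {N : ℕ} {X : Fin N → Type*} {f : (∀ j, X j) → Fin N → ℝ}
    {K : Fin N → Set (∀ j, X j)} {xs x : ∀ j, X j} (hxs : xs ∈ genNashEq f K) {i : Fin N}
    (hx : x ∈ K i) (hxi : ∀ j, j ≠ i → x j = xs j) : f xs i ≤ f x i := by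
  have hupdate : x = Function.update xs i (x i) := Function.eq_update_iff.mpr ⟨rfl, hxi⟩
  rw [hupdate] at hx ⊢
  exact hxs.2 i (x i) hx

/-- Necessary condition for generalized Nash equilibria: if `X̄ ⊆ ⋂ i, 𝕏 i`,
then every generalized Nash equilibrium lying in `X̄` is a `C`-Pareto minimizer
of `x ↦ (x, f(x))` over `X̄`. -/
theorem genNashEq_subset_paretoArgmin {N : ℕ} (X : Fin N → Type*)
    [∀ j, AddCommGroup (X j)] [∀ j, Module ℝ (X j)]
    (f : (∀ j, X j) → Fin N → ℝ) (K : Fin N → Set (∀ j, X j))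
    (Xbar : Set (∀ j, X j)) (hXbar : Xbar ⊆ ⋂ i, K i) :
    genNashEq f K ∩ Xbar ⊆ paretoArgmin (bigCone X) (fun x => (x, f x)) Xbar := by
  rintro xs ⟨hxs, hxs_bar⟩
  refine ⟨hxs_bar, fun x hx hdom => ?_⟩
  obtain ⟨i, hxi, -⟩ := mem_bigCone_sub_iff.mp hdom
  have hdev : ∀ j, j ≠ i → x j = xs j := fun j hj => (hxi j hj).symm
  have hfxs_le : f xs i ≤ f x i :=
    genNashEq.le_of_unilateral hxs (Set.mem_iInter.mp (hXbar hx) i) hdev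
  exact mem_bigCone_sub_iff.mpr ⟨i, hdev, hfxs_le⟩
end

section
/- Sufficient condition for generalized Nash equilibria: If 𝕏̲ ⊇ ⋃_{i=1}^N 𝕏_i, then every x* in C-argmin{(x, f(x)) : x ∈ 𝕏̲} that also lies in ⋂_{i=1}^N 𝕏_i is a generalized Nash equilibrium: (C-argmin{(x,f(x)) : x ∈ 𝕏̲}) ∩ (⋂_i 𝕏_i) ⊆ NE(f, (𝕏_i)). -/
/-! A player `i` who could strictly profit from a deviation `a` to `y = update x* i a` produces a
difference `(x* - y, f x* - f y)` in the cone `C_i ⊆ C`. Pareto minimality then puts the reverse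
difference `(y - x*, f y - f x*)` in `C`; its decision part is nonzero exactly in coordinate `i`, so
it can only lie in `C_i`, i.e. `f y i ≥ f x* i`. -/

section

variable {N : ℕ} {X : Fin N → Type*} [∀ j, AddCommGroup (X j)] [∀ j, Module ℝ (X j)]

theorem mem_bigCone_iff_of_eq_zero_of_ne {p : (∀ j, X j) × (Fin N → ℝ)} {i : Fin N}
    (hp : ∀ j ≠ i, p.1 j = 0) (hi : p.1 i ≠ 0) : p ∈ bigCone X ↔ 0 ≤ p.2 i := by
  refine ⟨fun ⟨k, hk, hv⟩ => ?_, fun hv => ⟨i, hp, hv⟩⟩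
  obtain rfl : k = i := by
    by_contra hki
    exact hi (hk i (Ne.symm hki))
  exact hv

theorem sub_update_mem_bigCone_iff {x : ∀ j, X j} {i : Fin N} {a : X i} (ha : a ≠ x i)
    (v : Fin N → ℝ) : (x - Function.update x i a, v) ∈ bigCone X ↔ 0 ≤ v i :=
  mem_bigCone_iff_of_eq_zero_of_ne (fun j hj => by simp [Function.update_of_ne hj])
    (by simpa [sub_eq_zero] using ha.symm)

theorem update_sub_mem_bigCone_iff {x : ∀ j, X j} {i : Fin N} {a : X i} (ha : a ≠ x i)
    (v : Fin N → ℝ) : (Function.update x i a - x, v) ∈ bigCone X ↔ 0 ≤ v i :=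
  mem_bigCone_iff_of_eq_zero_of_ne (fun j hj => by simp [Function.update_of_ne hj])
    (by simpa [sub_eq_zero] using ha)

theorem apply_le_apply_update_of_mem_paretoArgmin {f : (∀ j, X j) → Fin N → ℝ}
    {S : Set (∀ j, X j)} {x : ∀ j, X j} (hx : x ∈ paretoArgmin (bigCone X) (fun x => (x, f x)) S)
    {i : Fin N} {a : X i} (hy : Function.update x i a ∈ S) :
    f x i ≤ f (Function.update x i a) i := by
  rcases eq_or_ne a (x i) with rfl | ha
  · simp
  by_contra! hlt
  have hrev := hx.2 _ hy ((sub_update_mem_bigCone_iff ha _).2 (by simpa using hlt.le))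
  exact hlt.not_ge (by simpa using (update_sub_mem_bigCone_iff ha _).1 hrev)

end

/-- Sufficient condition for generalized Nash equilibria: if `𝕏̲ ⊇ ⋃ i, 𝕏 i`,
then every `C`-Pareto minimizer over `𝕏̲` that is feasible for the generalized
game (i.e. lies in `⋂ i, 𝕏 i`) is a generalized Nash equilibrium. -/
theorem paretoArgmin_inter_subset_genNashEq {N : ℕ} (X : Fin N → Type*)
    [∀ j, AddCommGroup (X j)] [∀ j, Module ℝ (X j)]
    (f : (∀ j, X j) → Fin N → ℝ) (K : Fin N → Set (∀ j, X j))
    (Xund : Set (∀ j, X j)) (hXund : (⋃ i, K i) ⊆ Xund) :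
    paretoArgmin (bigCone X) (fun x => (x, f x)) Xund ∩ (⋂ i, K i) ⊆
      genNashEq f K := by
  rintro x ⟨hx, hxK⟩
  exact ⟨hxK, fun i _ hy =>
    apply_le_apply_update_of_mem_paretoArgmin hx (hXund (Set.mem_iUnion.2 ⟨i, hy⟩))⟩
end

section
/- Exact characterization of generalized Nash equilibria: Let M = {x* ∈ NE(f, ⋂_i 𝕏_i) : ∃ i with inf{f_i(x_i, x*_{-i}) : (x_i, x*_{-i}) ∈ 𝕏_i} < f_i(x*)}. Then NE(f, (𝕏_i)_{i=1}^N) = C-argmin{(x, f(x)) : x ∈ ⋂_{i=1}^N 𝕏_i} \ M. -/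
/-- The set of Nash equilibria of the shared constraint game with constraint
`⋂ i, 𝕏 i`. -/
def nashEqShared {N : ℕ} {X : Fin N → Type*} (f : (∀ j, X j) → Fin N → ℝ)
    (K : Fin N → Set (∀ j, X j)) : Set (∀ j, X j) :=
  {xs | xs ∈ ⋂ i, K i ∧ ∀ (i : Fin N) (xi : X i),
    Function.update xs i xi ∈ ⋂ j, K j → f xs i ≤ f (Function.update xs i xi) i}

/-- The exceptional set `M`: equilibria of the shared-constraint intersection
game at which some player could strictly decrease her cost by a deviation that
is feasible for her own constraint set (i.e. `inf {f_i(x_i, x*_{-i}) :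
(x_i, x*_{-i}) ∈ 𝕏_i} < f_i(x*)`). -/
def exceptSet {N : ℕ} {X : Fin N → Type*} (f : (∀ j, X j) → Fin N → ℝ)
    (K : Fin N → Set (∀ j, X j)) : Set (∀ j, X j) :=
  {xs | xs ∈ nashEqShared f K ∧ ∃ (i : Fin N) (xi : X i),
    Function.update xs i xi ∈ K i ∧ f (Function.update xs i xi) i < f xs i}

/-!
A pair `(x, f x) - (y, f y)` lies in the cone `C` exactly when `y` is a unilateral deviation of
some player `i` from `x` that does not raise her cost. Hence a `C`-Pareto minimizer is a point
from which no feasible unilateral deviation strictly lowers the deviating player's cost, i.e. a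
Nash equilibrium of the shared-constraint game. A generalized Nash equilibrium additionally
admits no profitable deviation that is feasible only for the deviator's own set `𝕏 i`, which is
precisely what removing the exceptional set `M` enforces.
-/

section

variable {N : ℕ} {X : Fin N → Type*}

theorem sub_mem_bigCone_iff [∀ j, AddCommGroup (X j)] [∀ j, Module ℝ (X j)]
    {x y : ∀ j, X j} {u v : Fin N → ℝ} :
    (x, u) - (y, v) ∈ bigCone X ↔ ∃ i, (∀ j ≠ i, x j = y j) ∧ v i ≤ u i := by
  simp only [bigCone, Set.mem_ofPred_eq, Prod.fst_sub, Prod.snd_sub, Pi.sub_apply, sub_eq_zero,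
    sub_nonneg]

theorem paretoArgmin_bigCone_eq_nashEqShared [∀ j, AddCommGroup (X j)] [∀ j, Module ℝ (X j)]
    (f : (∀ j, X j) → Fin N → ℝ) (K : Fin N → Set (∀ j, X j)) :
    paretoArgmin (bigCone X) (fun x => (x, f x)) (⋂ i, K i) = nashEqShared f K := by
  ext xs
  simp only [paretoArgmin, nashEqShared, Set.mem_ofPred_eq, sub_mem_bigCone_iff]
  refine and_congr_right fun _ => ⟨fun hpar i xi hfeas => ?_, fun hnash x hx => ?_⟩
  · by_contra! hlt
    obtain ⟨k, hagree, hle⟩ := hpar _ hfeas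
      ⟨i, fun j hj => (Function.update_of_ne hj xi xs).symm, hlt.le⟩
    rcases eq_or_ne k i with rfl | hki
    · exact hle.not_gt hlt
    · -- a deviation of player `i` that agrees with `xs` at coordinate `i` is no deviation
      have hxi : xi = xs i := by simpa using hagree i hki.symm
      simp [hxi] at hlt
  · rintro ⟨i, hagree, -⟩
    have hx_eq : x = Function.update xs i (x i) :=
      Function.eq_update_iff.mpr ⟨rfl, fun j hj => (hagree j hj).symm⟩
    refine ⟨i, fun j hj => (hagree j hj).symm, ?_⟩
    have := hnash i (x i) (hx_eq ▸ hx)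
    rwa [← hx_eq] at this

theorem genNashEq_eq_nashEqShared_diff (f : (∀ j, X j) → Fin N → ℝ)
    (K : Fin N → Set (∀ j, X j)) :
    genNashEq f K = nashEqShared f K \ exceptSet f K := by
  ext xs
  simp only [genNashEq, nashEqShared, exceptSet, Set.mem_sdiff, Set.mem_ofPred_eq, not_and,
    not_exists, not_lt]
  constructor
  · rintro ⟨hxs, hgen⟩
    exact ⟨⟨hxs, fun i xi hfeas => hgen i xi (Set.mem_iInter.mp hfeas i)⟩,
      fun _ i xi hfeas => hgen i xi hfeas⟩
  · rintro ⟨hshared, hnotM⟩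
    exact ⟨hshared.1, fun i xi => hnotM hshared i xi⟩

end

/-- Exact characterization of generalized Nash equilibria:
`NE(f, (𝕏_i)) = C-argmin {(x, f(x)) : x ∈ ⋂ i, 𝕏 i} \ M`. -/
theorem genNashEq_eq_paretoArgmin_diff {N : ℕ} (X : Fin N → Type*)
    [∀ j, AddCommGroup (X j)] [∀ j, Module ℝ (X j)]
    (f : (∀ j, X j) → Fin N → ℝ) (K : Fin N → Set (∀ j, X j)) :
    genNashEq f K =
      paretoArgmin (bigCone X) (fun x => (x, f x)) (⋂ i, K i) \ exceptSet f K := by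
  rw [paretoArgmin_bigCone_eq_nashEqShared, genNashEq_eq_nashEqShared_diff]
end

section
/- Vector-valued generalized game, necessary condition: For a generalized game with vector-valued costs f_i: ∏_j X_j → Y_i ordered by convex cones K_i, and X̄ ⊆ ⋂_i 𝕏_i, every generalized Nash equilibrium x* ∈ X̄ is a C-Pareto minimizer of (x, f(x)) over X̄, where C = {(x, (f_i)) : ∃ i, x_{-i} = 0, f_i ∈ K_i}. -/
/-- The cone `C_i` for player `i` inside `(∏ j, X j) × (∏ j, Y j)`:
all strategy components other than `i` vanish and the `i`-th cost component
lies in the ordering cone `K i`. -/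
def vPlayerCone {N : ℕ} (X : Fin N → Type*) [∀ j, AddCommGroup (X j)]
    [∀ j, Module ℝ (X j)] (Y : Fin N → Type*) [∀ j, AddCommGroup (Y j)]
    [∀ j, Module ℝ (Y j)] (K : ∀ j, Set (Y j)) (i : Fin N) :
    Set ((∀ j, X j) × (∀ j, Y j)) :=
  {p | (∀ j, j ≠ i → p.1 j = 0) ∧ p.2 i ∈ K i}

/-- The non-convex ordering cone `C = ⋃ i, C_i` for vector-valued games. -/
def vBigCone {N : ℕ} (X : Fin N → Type*) [∀ j, AddCommGroup (X j)]
    [∀ j, Module ℝ (X j)] (Y : Fin N → Type*) [∀ j, AddCommGroup (Y j)]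
    [∀ j, Module ℝ (Y j)] (K : ∀ j, Set (Y j)) :
    Set ((∀ j, X j) × (∀ j, Y j)) :=
  {p | ∃ i, (∀ j, j ≠ i → p.1 j = 0) ∧ p.2 i ∈ K i}

/-- Generalized Nash equilibria of the vector-valued game: `x* ∈ ⋂ i, 𝕏 i`
such that for each player `i` and each deviation feasible for `𝕏 i`,
`f_i(x_i, x*_{-i}) ≤_{K_i} f_i(x*)` implies `f_i(x_i, x*_{-i}) ≥_{K_i} f_i(x*)`. -/
def vGenNashEq {N : ℕ} {X : Fin N → Type*} {Y : Fin N → Type*}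
    [∀ j, AddCommGroup (Y j)] (f : (∀ j, X j) → ∀ j, Y j)
    (K : ∀ j, Set (Y j)) (C : Fin N → Set (∀ j, X j)) : Set (∀ j, X j) :=
  {xs | xs ∈ ⋂ i, C i ∧ ∀ (i : Fin N) (xi : X i),
    Function.update xs i xi ∈ C i →
      (f xs i - f (Function.update xs i xi) i ∈ K i →
        f (Function.update xs i xi) i - f xs i ∈ K i)}

theorem sub_mem_of_mem_vGenNashEq {N : ℕ} {X Y : Fin N → Type*} [∀ j, AddCommGroup (Y j)]
    {f : (∀ j, X j) → ∀ j, Y j} {K : ∀ j, Set (Y j)} {C : Fin N → Set (∀ j, X j)}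
    {xs x : ∀ j, X j} (hxs : xs ∈ vGenNashEq f K C) {i : Fin N} (hx : x ∈ C i)
    (hagree : ∀ j ≠ i, xs j = x j) (hle : f xs i - f x i ∈ K i) :
    f x i - f xs i ∈ K i := by
  have hupdate : Function.update xs i (x i) = x := Function.update_eq_iff.2 ⟨rfl, hagree⟩
  have hdev := hxs.2 i (x i)
  rw [hupdate] at hdev
  exact hdev hx hle

theorem vGenNashEq_subset_paretoArgmin_general {N : ℕ} (X : Fin N → Type*)
    [∀ j, AddCommGroup (X j)] [∀ j, Module ℝ (X j)]
    (Y : Fin N → Type*) [∀ j, AddCommGroup (Y j)] [∀ j, Module ℝ (Y j)]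
    (K : ∀ j, Set (Y j))
    (f : (∀ j, X j) → ∀ j, Y j) (C : Fin N → Set (∀ j, X j))
    (Xbar : Set (∀ j, X j)) (hXbar : Xbar ⊆ ⋂ i, C i) :
    vGenNashEq f K C ∩ Xbar ⊆
      paretoArgmin (vBigCone X Y K) (fun x => (x, f x)) Xbar := by
  rintro xs ⟨hnash, hxs⟩
  -- a `vBigCone`-comparison of `x` with `xs` makes `x` a unilateral deviation of some player `i`
  refine ⟨hxs, fun x hx ⟨i, hzero, hle⟩ => ?_⟩
  have hagree : ∀ j ≠ i, xs j = x j := fun j hj => sub_eq_zero.1 (hzero j hj)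
  refine ⟨i, fun j hj => sub_eq_zero.2 (hagree j hj).symm, ?_⟩
  exact sub_mem_of_mem_vGenNashEq hnash (Set.mem_iInter.1 (hXbar hx) i) hagree hle

/-- Vector-valued generalized game, necessary condition: if each `K i` is a
convex cone and `X̄ ⊆ ⋂ i, 𝕏 i`, then every generalized Nash equilibrium of the
vector-valued game lying in `X̄` is a `C`-Pareto minimizer of `x ↦ (x, f(x))`
over `X̄`. -/
theorem vGenNashEq_subset_paretoArgmin {N : ℕ} (X : Fin N → Type*)
    [∀ j, AddCommGroup (X j)] [∀ j, Module ℝ (X j)]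
    (Y : Fin N → Type*) [∀ j, AddCommGroup (Y j)] [∀ j, Module ℝ (Y j)]
    (K : ∀ j, Set (Y j))
    (hK_cone : ∀ j, ∀ (α : ℝ), 0 ≤ α → ∀ y ∈ K j, α • y ∈ K j)
    (hK_conv : ∀ j, ∀ y ∈ K j, ∀ z ∈ K j, y + z ∈ K j)
    (f : (∀ j, X j) → ∀ j, Y j) (C : Fin N → Set (∀ j, X j))
    (Xbar : Set (∀ j, X j)) (hXbar : Xbar ⊆ ⋂ i, C i) :
    vGenNashEq f K C ∩ Xbar ⊆
      paretoArgmin (vBigCone X Y K) (fun x => (x, f x)) Xbar :=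
  vGenNashEq_subset_paretoArgmin_general X Y K f C Xbar hXbar
end
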